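/- arXiv:2412.01475 — 6 statements merged into one kernel-verified Lean document; each statement's English description precedes it below -/
import Mathlib

section
/- For p ∈ (-1, 0), the function t ↦ (t^(-p) - 1)^(-1/p) is convex on the interval (1, ∞). -/
/-!
Write `q = -p ∈ (0, 1)`. The derivative of `t ↦ (t ^ q - 1) ^ (1 / q)` is
`(t ^ q - 1) ^ (1 / q - 1) * t ^ (q - 1) = (1 - t ^ (-q)) ^ (1 / q - 1)`, which is monotone
because `1 - t ^ (-q)` increases and the exponent `1 / q - 1` is nonnegative; a function with
monotone derivative is convex.
-/

open Set Real

lemma hasDerivAt_rpow_sub_one_rpow_one_div {q x : ℝ} (hq : 0 < q) (hx : 1 < x) :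
    HasDerivAt (fun t : ℝ ↦ (t ^ q - 1) ^ (1 / q)) ((1 - x ^ (-q)) ^ (1 / q - 1)) x := by
  have hx0 : 0 < x := zero_lt_one.trans hx
  have hu : 0 < x ^ q - 1 := sub_pos.2 (one_lt_rpow hx hq)
  have hchain := ((hasDerivAt_rpow_const (p := q) (Or.inl hx0.ne')).sub_const 1).rpow_const
    (p := 1 / q) (Or.inl hu.ne')
  convert hchain using 1
  have hsplit : 1 - x ^ (-q) = (x ^ q - 1) * x ^ (-q) := by
    rw [sub_mul, ← rpow_add hx0, add_neg_cancel, rpow_zero, one_mul]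
  have hexp : -q * (1 / q - 1) = q - 1 := by field_simp; ring
  rw [hsplit, mul_rpow hu.le (rpow_nonneg hx0.le _), ← rpow_mul hx0.le, hexp]
  field_simp

lemma monotoneOn_one_sub_rpow_neg_rpow {q a : ℝ} (hq : 0 ≤ q) (ha : 0 ≤ a) :
    MonotoneOn (fun t : ℝ ↦ (1 - t ^ (-q)) ^ a) (Ici 1) := by
  intro x (hx : 1 ≤ x) y _ hxy
  exact rpow_le_rpow (sub_nonneg.2 (rpow_le_one_of_one_le_of_nonpos hx (neg_nonpos.2 hq)))
    (sub_le_sub_left (rpow_le_rpow_of_nonpos (zero_lt_one.trans_le hx) hxy (neg_nonpos.2 hq)) 1)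
    ha

theorem convexOn_rpow_sub_one_rpow_one_div {q : ℝ} (hq0 : 0 < q) (hq1 : q ≤ 1) :
    ConvexOn ℝ (Ici 1) (fun t : ℝ ↦ (t ^ q - 1) ^ (1 / q)) := by
  have hderiv : EqOn (deriv fun t : ℝ ↦ (t ^ q - 1) ^ (1 / q))
      (fun t ↦ (1 - t ^ (-q)) ^ (1 / q - 1)) (Ioi 1) :=
    fun x hx ↦ (hasDerivAt_rpow_sub_one_rpow_one_div hq0 hx).deriv
  refine MonotoneOn.convexOn_of_deriv (convex_Ici 1) ?_ ?_ ?_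
  · refine ((continuousOn_id.rpow_const fun x (hx : 1 ≤ x) ↦ ?_).sub continuousOn_const).rpow_const
      fun _ _ ↦ Or.inr (one_div_nonneg.2 hq0.le)
    exact Or.inl (zero_lt_one.trans_le hx).ne'
  · rw [interior_Ici]
    exact fun x hx ↦
      (hasDerivAt_rpow_sub_one_rpow_one_div hq0 hx).differentiableAt.differentiableWithinAt
  · rw [interior_Ici]
    have hmono := monotoneOn_one_sub_rpow_neg_rpow hq0.le (sub_nonneg.2 (one_le_one_div hq0 hq1))
    exact (hmono.mono Ioi_subset_Ici_self).congr hderiv.symm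

theorem convexOn_rpow_sub_one_rpow (p : ℝ) (hp1 : -1 < p) (hp0 : p < 0) :
    ConvexOn ℝ (Set.Ioi (1 : ℝ)) (fun t : ℝ => (t ^ (-p) - 1) ^ (-1 / p)) := by
  have h := (convexOn_rpow_sub_one_rpow_one_div (neg_pos.2 hp0) (by linarith)).subset
    Ioi_subset_Ici_self (convex_Ioi 1)
  rwa [div_neg, ← neg_div] at h
end

section
/- Let K ⊆ ℝⁿ be a convex body, p > -1, and x a unit vector. Then ∫_K ρ_K(z,x)^p dz = (p+1)^{-1} ∫_{⟨x⟩^⊥} X_x K(y)^{1+p} dy, where ρ_K(z,x) is the largest λ > 0 with z + λx ∈ K and X_x K(y) is the length of K ∩ (y + ⟨x⟩). -/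
open MeasureTheory Set Submodule RealInnerProductSpace

section Helpers

lemma gz_measurable_rpow_const (q : ℝ) : Measurable fun x : ℝ => x ^ q :=
  measurable_of_continuousOn_compl_singleton 0 fun x hx =>
    (Real.continuousAt_rpow_const x q (Or.inl hx)).continuousWithinAt

lemma gz_oneDim {a b p : ℝ} (hab : a ≤ b) (hp : -1 < p) :
    ∫⁻ t in Icc a b, ENNReal.ofReal ((b - t) ^ p)
      = ENNReal.ofReal ((b - a) ^ (p + 1) / (p + 1)) := by
  have hmp : MeasurePreserving (fun t : ℝ => b - t) volume volume :=
    Measure.measurePreserving_sub_left volume b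
  have hemb : MeasurableEmbedding (fun t : ℝ => b - t) :=
    (MeasurableEquiv.subLeft b).measurableEmbedding
  have hpre : (fun t : ℝ => b - t) ⁻¹' (Icc 0 (b - a)) = Icc a b := by
    ext t; simp only [mem_preimage, mem_Icc]; constructor <;> intro h <;>
      constructor <;> linarith [h.1, h.2]
  have key := hmp.setLIntegral_comp_preimage_emb hemb
    (fun s => ENNReal.ofReal (s ^ p)) (Icc 0 (b - a))
  rw [hpre] at key
  rw [key]
  have h1 : IntegrableOn (fun s : ℝ => s ^ p) (Icc 0 (b - a)) volume := by
    rw [integrableOn_Icc_iff_integrableOn_Ioc]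
    exact (intervalIntegral.intervalIntegrable_rpow' hp (a := 0) (b := b - a)).1
  have h2 : 0 ≤ᶠ[ae (volume.restrict (Icc 0 (b - a)))] fun s : ℝ => s ^ p := by
    filter_upwards [ae_restrict_mem measurableSet_Icc] with s hs
    exact Real.rpow_nonneg hs.1 p
  rw [← ofReal_integral_eq_lintegral_ofReal h1 h2]
  congr 1
  rw [integral_Icc_eq_integral_Ioc,
    ← intervalIntegral.integral_of_le (by linarith : (0:ℝ) ≤ b - a),
    integral_rpow (Or.inl hp), Real.zero_rpow (by linarith), sub_zero]

variable {E : Type*} [NormedAddCommGroup E] [InnerProductSpace ℝ E]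
  [FiniteDimensional ℝ E] [MeasurableSpace E] [BorelSpace E]

lemma gz_exists_mp (x : E) (hx : ‖x‖ = 1) :
    ∃ ψ : (((ℝ ∙ x)ᗮ : Submodule ℝ E) × ℝ) ≃ᵐ E,
      MeasurePreserving ψ (volume.prod volume) volume ∧
      ∀ q : ((ℝ ∙ x)ᗮ : Submodule ℝ E) × ℝ, ψ q = (q.1 : E) + q.2 • x := by
  set A : Submodule ℝ E := (ℝ ∙ x)ᗮ with hA
  set m := Module.finrank ℝ A with hm
  set b : OrthonormalBasis (Fin m) ℝ A := stdOrthonormalBasis ℝ A with hb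
  set v : Fin m ⊕ Unit → E := Sum.elim (fun i => (b i : E)) (fun _ => x) with hv
  have hxA : ∀ a : A, ⟪x, (a : E)⟫ = 0 := fun a =>
    (Submodule.mem_orthogonal _ _).1 a.2 x (mem_span_singleton_self x)
  have hxA' : ∀ a : A, ⟪(a : E), x⟫ = 0 := fun a => by
    rw [real_inner_comm]; exact hxA a
  have hon : Orthonormal ℝ v := by
    rw [orthonormal_iff_ite]
    rintro (i | i) (j | j)
    · simpa [v, Submodule.coe_inner] using (orthonormal_iff_ite.1 b.orthonormal) i j
    · simp only [v, Sum.elim_inl, Sum.elim_inr]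
      rw [real_inner_comm, hxA (b i)]
      simp
    · simp only [v, Sum.elim_inl, Sum.elim_inr]
      rw [hxA (b j)]
      simp
    · simp [v, real_inner_self_eq_norm_sq, hx]
  have hsp : ⊤ ≤ span ℝ (Set.range v) := by
    have hcompl : IsCompl (ℝ ∙ x) A := Submodule.isCompl_orthogonal_of_hasOrthogonalProjection
    rw [← hcompl.sup_eq_top]
    apply sup_le
    · rw [span_singleton_le_iff_mem]
      exact subset_span ⟨Sum.inr (), rfl⟩
    · have h1 : span ℝ (Set.range fun i => (b i : E)) = A := by
        have h2 : Set.range (fun i => (b i : E)) = A.subtype '' Set.range b := by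
          rw [← Set.range_comp]; rfl
        have h3 : span ℝ (Set.range ⇑b) = ⊤ := by
          rw [← b.coe_toBasis]; exact b.toBasis.span_eq
        rw [h2, Submodule.span_image, h3, Submodule.map_top, range_subtype]
      rw [← h1]
      apply span_mono
      rintro _ ⟨i, rfl⟩
      exact ⟨Sum.inl i, rfl⟩
  set B : OrthonormalBasis (Fin m ⊕ Unit) ℝ E := OrthonormalBasis.mk hon hsp with hB
  set ψ : (A × ℝ) ≃ᵐ E :=
    (MeasurableEquiv.prodCongr (b.measurableEquiv.trans (MeasurableEquiv.toLp 2 (Fin m → ℝ)).symm)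
      (MeasurableEquiv.funUnique Unit ℝ).symm).trans
    ((MeasurableEquiv.sumPiEquivProdPi (fun _ : Fin m ⊕ Unit => ℝ)).symm.trans
    ((MeasurableEquiv.toLp 2 (Fin m ⊕ Unit → ℝ)).trans B.measurableEquiv.symm)) with hψ
  refine ⟨ψ, ?_, ?_⟩
  · have h1 : MeasurePreserving
        (Prod.map (⇑(b.measurableEquiv.trans (MeasurableEquiv.toLp 2 (Fin m → ℝ)).symm))
          (⇑(MeasurableEquiv.funUnique Unit ℝ).symm))
        (volume.prod volume) (volume.prod volume) :=
      ((EuclideanSpace.volume_preserving_symm_measurableEquiv_toLp (Fin m)).comp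
        b.measurePreserving_measurableEquiv).prod
        ((volume_preserving_funUnique Unit ℝ).symm _)
    have h2 := volume_measurePreserving_sumPiEquivProdPi_symm (fun _ : Fin m ⊕ Unit => ℝ)
    have h3 := (EuclideanSpace.volume_preserving_symm_measurableEquiv_toLp (Fin m ⊕ Unit)).symm
    have h4 := B.measurePreserving_measurableEquiv.symm
    exact ((h4.comp h3).comp h2).comp h1
  · rintro ⟨y, t⟩
    apply B.repr.injective
    ext i
    have hrepr : B.repr (ψ (y, t)) = B.measurableEquiv (ψ (y, t)) := rfl
    rw [hrepr]
    simp only [hψ, MeasurableEquiv.trans_apply, MeasurableEquiv.apply_symm_apply]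
    have hBi : ∀ i, B i = v i := fun i => by rw [hB, OrthonormalBasis.coe_mk]
    rw [B.repr_apply_apply, hBi i]
    cases i with
    | inl j =>
        rw [show v (Sum.inl j) = (b j : E) from rfl, inner_add_right, real_inner_smul_right,
          hxA' (b j), mul_zero, add_zero, ← Submodule.coe_inner, ← b.repr_apply_apply]
        rfl
    | inr j =>
        rw [show v (Sum.inr j) = x from rfl, inner_add_right, real_inner_smul_right, hxA y,
          real_inner_self_eq_norm_sq, hx]
        show t = 0 + t * 1 ^ 2
        ring

lemma gz_meas_rho {K : Set E} (hKc : IsCompact K) (x : E) (hx : ‖x‖ = 1) :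
    Measurable fun z : E => sSup {t : ℝ | 0 < t ∧ z + t • x ∈ K} := by
  obtain ⟨R, hR⟩ := hKc.isBounded.exists_norm_le
  have hbdd : ∀ z : E, BddAbove {t : ℝ | 0 < t ∧ z + t • x ∈ K} := by
    intro z
    refine ⟨R + ‖z‖, fun t ht => ?_⟩
    have h1 : ‖t • x‖ ≤ ‖z + t • x‖ + ‖z‖ := by
      have := norm_sub_le (z + t • x) z
      simpa using this
    rw [norm_smul, hx, mul_one, Real.norm_eq_abs, abs_of_pos ht.1] at h1
    linarith [hR _ ht.2]
  apply measurable_of_Ici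
  intro c
  rcases le_or_gt c 0 with hc | hc
  · have : (fun z : E => sSup {t : ℝ | 0 < t ∧ z + t • x ∈ K}) ⁻¹' Ici c = univ := by
      ext z
      simp only [mem_preimage, mem_Ici, mem_univ, iff_true]
      exact le_trans hc (Real.sSup_nonneg fun t ht => ht.1.le)
    rw [this]; exact MeasurableSet.univ
  · have key : (fun z : E => sSup {t : ℝ | 0 < t ∧ z + t • x ∈ K}) ⁻¹' Ici c
        = ⋃ M : ℕ, (fun q : E × ℝ => q.1 - q.2 • x) '' (K ×ˢ Icc c (c + M)) := by
      ext z
      simp only [mem_preimage, mem_Ici, mem_iUnion, mem_image, mem_prod, mem_Icc, Prod.exists]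
      constructor
      · intro hz
        set S := {t : ℝ | 0 < t ∧ z + t • x ∈ K} with hSdef
        have hne : S.Nonempty := by
          by_contra h
          rw [not_nonempty_iff_eq_empty] at h
          rw [h, Real.sSup_empty] at hz
          linarith
        have hβK : z + (sSup S) • x ∈ K := by
          have h1 : sSup S ∈ closure S := csSup_mem_closure hne (hbdd z)
          have h2 : closure S ⊆ {t : ℝ | z + t • x ∈ K} := by
            apply closure_minimal (fun t ht => ht.2)
            exact hKc.isClosed.preimage (by continuity)
          exact h2 h1
        refine ⟨⌈sSup S - c⌉₊, z + (sSup S) • x, sSup S, ⟨hβK, hz, ?_⟩, by abel⟩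
        have := Nat.le_ceil (sSup S - c)
        linarith
      · rintro ⟨M, k, t, ⟨hk, htc, htM⟩, rfl⟩
        have : t ∈ {s : ℝ | 0 < s ∧ (k - t • x) + s • x ∈ K} := by
          constructor
          · linarith
          · simpa using hk
        exact le_trans htc (le_csSup (hbdd _) this)
    rw [key]
    apply MeasurableSet.iUnion
    intro M
    apply IsCompact.measurableSet
    apply (hKc.prod isCompact_Icc).image
    exact continuous_fst.sub (continuous_snd.smul continuous_const)

end Helpers

theorem gardner_zhang_xray_formula (n : ℕ) (K : Set (EuclideanSpace ℝ (Fin n)))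
    (hK : Convex ℝ K) (hKc : IsCompact K) (hKi : (interior K).Nonempty)
    (p : ℝ) (hp : -1 < p) (x : EuclideanSpace ℝ (Fin n)) (hx : ‖x‖ = 1) :
    ∫ z in K, (sSup {t : ℝ | 0 < t ∧ z + t • x ∈ K}) ^ p
      = (p + 1)⁻¹ *
        ∫ y : ((ℝ ∙ x)ᗮ : Submodule ℝ (EuclideanSpace ℝ (Fin n))),
          ((volume {t : ℝ | (y : EuclideanSpace ℝ (Fin n)) + t • x ∈ K}).toReal) ^ (1 + p) := by
  classical
  set A : Submodule ℝ (EuclideanSpace ℝ (Fin n)) := (ℝ ∙ x)ᗮ with hA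
  set ρ : EuclideanSpace ℝ (Fin n) → ℝ := fun z => sSup {t : ℝ | 0 < t ∧ z + t • x ∈ K} with hρ
  set I : A → Set ℝ := fun y => {t : ℝ | (y : EuclideanSpace ℝ (Fin n)) + t • x ∈ K} with hI
  have hp1 : (0:ℝ) < p + 1 := by linarith
  obtain ⟨R, hR⟩ := hKc.isBounded.exists_norm_le
  obtain ⟨ψ, hψmp, hψ⟩ := gz_exists_mp x hx
  set S : Set (A × ℝ) := ⇑ψ ⁻¹' K with hSdef
  have hKmeas : MeasurableSet K := hKc.isClosed.measurableSet
  have hS : MeasurableSet S := ψ.measurable hKmeas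
  have hIyS : ∀ y : A, Prod.mk y ⁻¹' S = I y := by
    intro y; ext t
    simp only [mem_preimage, hSdef, hψ (y, t), hI, mem_setOf_eq]
  have hρmeas : Measurable ρ := gz_meas_rho hKc x hx
  have hρnn : ∀ z, 0 ≤ ρ z := fun z => Real.sSup_nonneg fun t ht => ht.1.le
  have hgmeas : Measurable fun z : EuclideanSpace ℝ (Fin n) => ρ z ^ p := (gz_measurable_rpow_const p).comp hρmeas
  have hImeas : ∀ y : A, MeasurableSet (I y) := by
    intro y
    exact (hKc.isClosed.preimage
      (continuous_const.add (continuous_id.smul continuous_const))).measurableSet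
  -- key per-fiber computation
  have hfiber : ∀ y : A,
      ∫⁻ t, S.indicator (fun q : A × ℝ => ENNReal.ofReal (ρ (ψ q) ^ p)) (y, t)
        = ENNReal.ofReal (((volume (I y)).toReal) ^ (1 + p) / (p + 1)) := by
    intro y
    have hind : ∀ t : ℝ,
        S.indicator (fun q : A × ℝ => ENNReal.ofReal (ρ (ψ q) ^ p)) (y, t)
          = (I y).indicator (fun t => ENNReal.ofReal (ρ ((y : EuclideanSpace ℝ (Fin n)) + t • x) ^ p)) t := by
      intro t
      rw [Set.indicator_apply, Set.indicator_apply]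
      have hm : (y, t) ∈ S ↔ t ∈ I y := by
        rw [← hIyS y]; rfl
      by_cases h : t ∈ I y
      · rw [if_pos (hm.2 h), if_pos h, hψ (y, t)]
      · rw [if_neg (fun hh => h (hm.1 hh)), if_neg h]
    simp_rw [hind]
    rw [lintegral_indicator (hImeas y)]
    by_cases hne : (I y).Nonempty
    · -- the fiber is a nonempty compact interval
      have hIsub : I y ⊆ Icc (-(R + ‖(y : EuclideanSpace ℝ (Fin n))‖)) (R + ‖(y : EuclideanSpace ℝ (Fin n))‖) := by
        intro t ht
        have h1 : ‖t • x‖ ≤ ‖(y : EuclideanSpace ℝ (Fin n)) + t • x‖ + ‖(y : EuclideanSpace ℝ (Fin n))‖ := by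
          have := norm_sub_le ((y : EuclideanSpace ℝ (Fin n)) + t • x) (y : EuclideanSpace ℝ (Fin n))
          simpa using this
        rw [norm_smul, hx, mul_one, Real.norm_eq_abs] at h1
        have h2 : |t| ≤ R + ‖(y : EuclideanSpace ℝ (Fin n))‖ := le_trans h1 (by linarith [hR _ ht])
        exact abs_le.1 h2
      have hIclosed : IsClosed (I y) :=
        hKc.isClosed.preimage (continuous_const.add (continuous_id.smul continuous_const))
      have hIcpt : IsCompact (I y) := isCompact_Icc.of_isClosed_subset hIclosed hIsub
      have hIconv : Convex ℝ (I y) := by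
        have hset : I y = (AffineMap.lineMap ((y : EuclideanSpace ℝ (Fin n)))
            ((y : EuclideanSpace ℝ (Fin n)) + x)) ⁻¹' K := by
          ext t
          simp only [hI, mem_setOf_eq, mem_preimage, AffineMap.lineMap_apply, vsub_eq_sub,
            vadd_eq_add, add_sub_cancel_left]
          rw [add_comm]
        rw [hset]
        exact hK.affine_preimage _
      set a := sInf (I y) with ha
      set b := sSup (I y) with hbb
      have hIcc : I y = Icc a b :=
        eq_Icc_of_connected_compact (hIconv.isConnected hne) hIcpt
      have hab : a ≤ b := by
        rcases hne with ⟨t, ht⟩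
        rw [hIcc] at ht
        exact le_trans ht.1 ht.2
      have hrho : ∀ t ∈ Icc a b, ρ ((y : EuclideanSpace ℝ (Fin n)) + t • x) = b - t := by
        intro t ht
        have hset : {s : ℝ | 0 < s ∧ ((y : EuclideanSpace ℝ (Fin n)) + t • x) + s • x ∈ K} = Ioc 0 (b - t) := by
          ext s
          have hrw : ((y : EuclideanSpace ℝ (Fin n)) + t • x) + s • x = (y : EuclideanSpace ℝ (Fin n)) + (t + s) • x := by
            rw [add_smul]; abel
          simp only [mem_setOf_eq, mem_Ioc, hrw]
          constructor
          · rintro ⟨hs, hmem⟩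
            have hmem' : t + s ∈ I y := hmem
            rw [hIcc] at hmem'
            exact ⟨hs, by linarith [hmem'.2]⟩
          · rintro ⟨hs, hsb⟩
            refine ⟨hs, ?_⟩
            have hmem' : t + s ∈ Icc a b := ⟨by linarith [ht.1], by linarith⟩
            have hmem'' : t + s ∈ I y := by rw [hIcc]; exact hmem'
            exact hmem''
        rw [hρ]
        show sSup {s : ℝ | 0 < s ∧ ((y : EuclideanSpace ℝ (Fin n)) + t • x) + s • x ∈ K} = b - t
        rw [hset]
        rcases eq_or_lt_of_le ht.2 with heq | hlt
        · rw [heq, sub_self, Ioc_self, Real.sSup_empty]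
        · exact csSup_Ioc (by linarith)
      have hvol : (volume (I y)).toReal = b - a := by
        rw [hIcc, Real.volume_Icc, ENNReal.toReal_ofReal (by linarith)]
      calc ∫⁻ t in I y, ENNReal.ofReal (ρ ((y : EuclideanSpace ℝ (Fin n)) + t • x) ^ p)
          = ∫⁻ t in Icc a b, ENNReal.ofReal ((b - t) ^ p) := by
            rw [hIcc]
            refine setLIntegral_congr_fun measurableSet_Icc (fun t ht => ?_)
            rw [hrho t ht]
        _ = ENNReal.ofReal ((b - a) ^ (p + 1) / (p + 1)) := gz_oneDim hab hp
        _ = ENNReal.ofReal (((volume (I y)).toReal) ^ (1 + p) / (p + 1)) := by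
            rw [hvol, add_comm p 1]
    · rw [not_nonempty_iff_eq_empty] at hne
      rw [hne, Measure.restrict_empty, lintegral_zero_measure, measure_empty]
      rw [ENNReal.toReal_zero, Real.zero_rpow (by linarith), zero_div, ENNReal.ofReal_zero]
  -- left-hand side as a lower integral
  have hLHS : ∫ z in K, ρ z ^ p
      = (∫⁻ z in K, ENNReal.ofReal (ρ z ^ p)).toReal := by
    refine integral_eq_lintegral_of_nonneg_ae (ae_of_all _ fun z => ?_)
      hgmeas.aestronglyMeasurable
    exact Real.rpow_nonneg (hρnn z) p
  have hstep : ∫⁻ z in K, ENNReal.ofReal (ρ z ^ p)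
      = ∫⁻ y : A, ENNReal.ofReal (((volume (I y)).toReal) ^ (1 + p) / (p + 1)) := by
    have h1 := hψmp.setLIntegral_comp_preimage_emb ψ.measurableEmbedding
      (fun z => ENNReal.ofReal (ρ z ^ p)) K
    rw [← h1, ← hSdef]
    rw [← lintegral_indicator hS]
    have hFmeas : Measurable fun q : A × ℝ => ENNReal.ofReal (ρ (ψ q) ^ p) :=
      Measurable.ennreal_ofReal
        (Measurable.comp (gz_measurable_rpow_const p) (hρmeas.comp ψ.measurable))
    rw [lintegral_prod _ ((hFmeas.indicator hS).aemeasurable)]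
    exact lintegral_congr hfiber
  -- right-hand side as a lower integral
  have hlenmeas : Measurable fun y : A => (volume (I y)).toReal := by
    have h0 : (fun y : A => (volume (I y)).toReal)
        = fun y : A => (volume (Prod.mk y ⁻¹' S)).toReal := by
      funext y; rw [hIyS y]
    rw [h0]
    exact (measurable_measure_prodMk_left (ν := (volume : Measure ℝ)) hS).ennreal_toReal
  have hRHS : ∫ y : A, ((volume (I y)).toReal) ^ (1 + p)
      = (∫⁻ y : A, ENNReal.ofReal (((volume (I y)).toReal) ^ (1 + p))).toReal := by
    refine integral_eq_lintegral_of_nonneg_ae (ae_of_all _ fun y => ?_)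
      (((gz_measurable_rpow_const (1+p)).comp hlenmeas).aestronglyMeasurable)
    exact Real.rpow_nonneg ENNReal.toReal_nonneg _
  have hsplit : ∀ y : A,
      ENNReal.ofReal (((volume (I y)).toReal) ^ (1 + p) / (p + 1))
        = ENNReal.ofReal ((p + 1)⁻¹) * ENNReal.ofReal (((volume (I y)).toReal) ^ (1 + p)) := by
    intro y
    rw [div_eq_mul_inv, mul_comm, ENNReal.ofReal_mul (by positivity)]
  calc ∫ z in K, ρ z ^ p
      = (∫⁻ y : A, ENNReal.ofReal (((volume (I y)).toReal) ^ (1 + p) / (p + 1))).toReal := by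
        rw [hLHS, hstep]
    _ = (ENNReal.ofReal ((p + 1)⁻¹)
          * ∫⁻ y : A, ENNReal.ofReal (((volume (I y)).toReal) ^ (1 + p))).toReal := by
        rw [← lintegral_const_mul' _ _ ENNReal.ofReal_ne_top]
        congr 1
        exact lintegral_congr hsplit
    _ = (p + 1)⁻¹ * ∫ y : A, ((volume (I y)).toReal) ^ (1 + p) := by
        rw [ENNReal.toReal_mul, ENNReal.toReal_ofReal (by positivity), hRHS]
end

section
/- Let K_m ⊆ ℝⁿ be convex bodies converging to a convex body K in the Hausdorff metric, let p ∈ (-1, 0), and let x be a unit vector. Then ∫_{⟨x⟩^⊥} X_x K_m(y)^(1+p) dy converges to ∫_{⟨x⟩^⊥} X_x K(y)^(1+p) dy, where X_x C(y) is the length of the chord C ∩ (y + ⟨x⟩). -/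
/-!
For almost every `y ⊥ x` the line `y + ℝx` either misses `K` or meets its interior: the other `y`
lie on the frontier of the (convex) orthogonal projection of `K`, a null set. On such lines the
chord lengths of `K_m` converge to that of `K`. From above, because `K_m` eventually lies in every
`δ`-neighbourhood of `K` and the chords of these neighbourhoods decrease to the chord of `K`. From
below, because a compact piece of the open chord of `interior K` has an `r`-neighbourhood inside
`K`, hence inside the `r`-neighbourhood of `K_m` for large `m`, and a convex closed set contains
every point whose closed `r`-ball lies in its `r`-neighbourhood. The chord lengths are bounded by
the diameter and vanish outside a ball, so dominated convergence finishes the proof.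
-/

open MeasureTheory Metric Filter Set Topology
open scoped ENNReal

theorem Metric.subset_thickening_of_hausdorffDist_lt {X : Type*} [PseudoMetricSpace X]
    {A B : Set X} {δ : ℝ} (hB : B.Nonempty) (hfin : hausdorffEDist A B ≠ ⊤)
    (h : hausdorffDist A B < δ) : A ⊆ thickening δ B := fun _ ha =>
  (mem_thickening_iff_infDist_lt hB).2 ((infDist_le_hausdorffDist_of_mem ha hfin).trans_lt h)

theorem Convex.interior_image_subset_image_interior {E F : Type*} [AddCommGroup E] [Module ℝ E]
    [TopologicalSpace E] [IsTopologicalAddGroup E] [ContinuousSMul ℝ E] [AddCommGroup F]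
    [Module ℝ F] [TopologicalSpace F] [IsTopologicalAddGroup F] [ContinuousSMul ℝ F]
    {K : Set E} (hK : Convex ℝ K) (hKi : (interior K).Nonempty) (f : E →L[ℝ] F)
    (hf : IsOpenMap f) : interior (f '' K) ⊆ f '' interior K := by
  have hU : IsOpen (f '' interior K) := hf _ isOpen_interior
  have hconv : Convex ℝ (f '' interior K) := hK.interior.linear_image (f : E →ₗ[ℝ] F)
  have hK_sub : K ⊆ closure (interior K) := by
    rw [hK.closure_interior_eq_closure_of_nonempty_interior hKi]; exact subset_closure
  calc interior (f '' K)
      ⊆ interior (closure (f '' interior K)) :=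
        interior_mono ((image_mono hK_sub).trans (image_closure_subset_closure_image f.continuous))
    _ = interior (f '' interior K) :=
        hconv.interior_closure_eq_interior_of_nonempty_interior
          (by rw [hU.interior_eq]; exact hKi.image f)
    _ = f '' interior K := hU.interior_eq

section NormedSpace

variable {E : Type*} [NormedAddCommGroup E] [NormedSpace ℝ E] {C K : Set E} {x y : E}

-- The X-ray `X_x C(y)` of the paper is `volume (chord C x y)`.
def chord (C : Set E) (x y : E) : Set ℝ := (fun t : ℝ => y + t • x) ⁻¹' C

theorem isBounded_chord (hC : Bornology.IsBounded C) (hx : x ≠ 0) :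
    Bornology.IsBounded (chord C x y) := by
  obtain ⟨R, hR⟩ := hC.subset_closedBall y
  refine (isBounded_closedBall (x := 0) (r := R / ‖x‖)).subset fun t ht => ?_
  have ht' := hR ht
  rw [mem_closedBall, dist_eq_norm, add_sub_cancel_left, norm_smul] at ht'
  rw [mem_closedBall, dist_zero_right, le_div_iff₀ (norm_pos_iff.2 hx)]
  exact ht'

theorem chord_eq_preimage_lineMap (C : Set E) (x y : E) :
    chord C x y = AffineMap.lineMap (k := ℝ) y (y + x) ⁻¹' C := by
  ext t
  simp [chord, AffineMap.lineMap_apply, add_comm]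

theorem volume_chord_interior (hK : Convex ℝ K) (hy : (chord (interior K) x y).Nonempty) :
    volume (chord (interior K) x y) = volume (chord K x y) := by
  obtain ⟨t₀, ht₀⟩ := hy
  set L := AffineMap.lineMap (k := ℝ) y (y + x)
  simp only [chord_eq_preimage_lineMap] at ht₀ ⊢
  have hsub : L ⁻¹' K ⊆ closure (L ⁻¹' interior K) := fun t ht =>
    closure_mono (image_subset_iff.1 ((image_openSegment ℝ L t₀ t).trans_subset
      (hK.openSegment_interior_self_subset_interior ht₀ ht)))
      (segment_subset_closure_openSegment (right_mem_segment ℝ t₀ t))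
  refine le_antisymm (measure_mono (preimage_mono interior_subset)) ?_
  calc volume (L ⁻¹' K) ≤ volume (closure (L ⁻¹' interior K)) := measure_mono hsub
    _ = volume (L ⁻¹' interior K) :=
        measure_closure_of_null_frontier ((hK.interior.affine_preimage L).addHaar_frontier volume)

theorem eventually_volume_chord_lt {ι : Type*} {l : Filter ι} {C : ι → Set E}
    (hKc : IsClosed K) (hKb : Bornology.IsBounded K) (hx : x ≠ 0)
    (hC : ∀ δ > 0, ∀ᶠ i in l, C i ⊆ thickening δ K) {b : ℝ≥0∞}
    (hb : volume (chord K x y) < b) : ∀ᶠ i in l, volume (chord (C i) x y) < b := by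
  have hlim : Tendsto (fun δ => volume (chord (thickening δ K) x y)) (𝓝[>] 0)
      (𝓝 (volume (chord K x y))) := by
    have := tendsto_measure_biInter_gt (μ := volume) (a := (0 : ℝ))
      (s := fun δ => chord (thickening δ K) x y)
      (fun _ _ => (isOpen_thickening.preimage (by fun_prop)).nullMeasurableSet)
      (fun _ _ _ hij => preimage_mono (thickening_mono hij K))
      ⟨1, one_pos, (isBounded_chord hKb.thickening hx).measure_lt_top.ne⟩
    have hK_eq : ⋂ δ > (0 : ℝ), chord (thickening δ K) x y = chord K x y := by
      simp only [chord, gt_iff_lt, ← preimage_iInter₂, ← closure_eq_iInter_thickening,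
        hKc.closure_eq]
    rwa [hK_eq] at this
  obtain ⟨δ, hδb, hδ⟩ := ((hlim.eventually (gt_mem_nhds hb)).and self_mem_nhdsWithin).exists
  filter_upwards [hC δ hδ] with i hi using (measure_mono (preimage_mono hi)).trans_lt hδb

end NormedSpace

section InnerProductSpace

variable {E : Type*} [NormedAddCommGroup E] [InnerProductSpace ℝ E] {C K : Set E} {x y : E}

theorem Convex.mem_of_closedBall_subset_thickening [CompleteSpace E] (hC : Convex ℝ C)
    (hCc : IsClosed C) {s : E} {r : ℝ} (hr : 0 ≤ r)
    (h : closedBall s r ⊆ Metric.thickening r C) : s ∈ C := by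
  by_contra hs
  have hCne : C.Nonempty := by
    by_contra hCe
    simpa [not_nonempty_iff_eq_empty.1 hCe] using h (mem_closedBall_self hr)
  obtain ⟨w, hw, hmin⟩ := exists_norm_eq_iInf_of_complete_convex hCne hCc.isComplete hC s
  have hsep := (norm_eq_iInf_iff_real_inner_le_zero hC hw).1 hmin
  set u := s - w
  have hu : 0 < ‖u‖ := norm_pos_iff.2 (sub_ne_zero.2 fun h => hs (h ▸ hw))
  -- push `s` a distance `r` further away from its nearest point `w` in `C`
  set q := s + (r / ‖u‖) • u
  have hq : q ∈ closedBall s r := by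
    rw [mem_closedBall, dist_eq_norm, add_sub_cancel_left, norm_smul, Real.norm_eq_abs,
      abs_of_nonneg (by positivity), div_mul_cancel₀ _ hu.ne']
  obtain ⟨a, ha, hqa⟩ := mem_thickening_iff.1 (h hq)
  have : ‖u‖ * (‖u‖ + r) ≤ ‖u‖ * dist q a :=
    calc ‖u‖ * (‖u‖ + r) = inner ℝ u (q - w) := by
          rw [show q - w = u + (r / ‖u‖) • u by simp only [q, u]; abel, inner_add_right,
            real_inner_smul_right, real_inner_self_eq_norm_sq]
          field_simp
      _ ≤ inner ℝ u (q - w) - inner ℝ u (a - w) := by linarith [hsep a ha]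
      _ = inner ℝ u (q - a) := by rw [← inner_sub_right, sub_sub_sub_cancel_right]
      _ ≤ ‖u‖ * dist q a := by rw [dist_eq_norm]; exact real_inner_le_norm _ _
  nlinarith

theorem eventually_lt_volume_chord [CompleteSpace E] {ι : Type*} {l : Filter ι}
    {C : ι → Set E} (hC : ∀ i, Convex ℝ (C i)) (hCc : ∀ i, IsClosed (C i))
    (hK : Convex ℝ K) (hKC : ∀ δ > 0, ∀ᶠ i in l, K ⊆ thickening δ (C i))
    (hy : (chord (interior K) x y).Nonempty) {a : ℝ≥0∞} (ha : a < volume (chord K x y)) :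
    ∀ᶠ i in l, a < volume (chord (C i) x y) := by
  rw [← volume_chord_interior hK hy] at ha
  have hline : Continuous fun t : ℝ => y + t • x := by fun_prop
  obtain ⟨S, hSsub, hS, haS⟩ := (isOpen_interior.preimage hline).exists_lt_isCompact ha
  obtain ⟨r, hr, hrS⟩ := (hS.image hline).exists_cthickening_subset_open isOpen_interior
    (image_subset_iff.2 hSsub)
  filter_upwards [hKC r hr] with i hi
  refine haS.trans_le (measure_mono fun t ht => (hC i).mem_of_closedBall_subset_thickening
    (hCc i) hr.le ?_)
  exact (closedBall_subset_cthickening (mem_image_of_mem _ ht) r).trans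
    ((hrS.trans interior_subset).trans hi)

theorem tendsto_volume_chord [CompleteSpace E] {ι : Type*} {l : Filter ι} {C : ι → Set E}
    (hC : ∀ i, Convex ℝ (C i)) (hCc : ∀ i, IsClosed (C i)) (hK : Convex ℝ K)
    (hKc : IsClosed K) (hKb : Bornology.IsBounded K) (hx : x ≠ 0)
    (hCK : ∀ δ > 0, ∀ᶠ i in l, C i ⊆ thickening δ K)
    (hKC : ∀ δ > 0, ∀ᶠ i in l, K ⊆ thickening δ (C i))
    (hy : (chord (interior K) x y).Nonempty ∨ chord K x y = ∅) :
    Tendsto (fun i => volume (chord (C i) x y)) l (𝓝 (volume (chord K x y))) := by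
  refine tendsto_order.2 ⟨fun a ha => ?_, fun b hb =>
    eventually_volume_chord_lt hKc hKb hx hCK hb⟩
  rcases hy with hy | hy
  · exact eventually_lt_volume_chord hC hCc hK hKC hy ha
  · simp [hy] at ha

theorem mem_image_orthogonalProjectionOnto_iff {y : (ℝ ∙ x)ᗮ} :
    y ∈ (ℝ ∙ x)ᗮ.orthogonalProjectionOnto '' C ↔ (chord C x y).Nonempty := by
  constructor
  · rintro ⟨k, hk, rfl⟩
    have hk' := Submodule.sub_starProjection_mem_orthogonal (K := (ℝ ∙ x)ᗮ) k
    rw [Submodule.orthogonal_orthogonal, Submodule.mem_span_singleton] at hk'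
    obtain ⟨t, ht⟩ := hk'
    refine ⟨t, ?_⟩
    rwa [chord, mem_preimage, ht, Submodule.starProjection_apply, add_sub_cancel]
  · rintro ⟨t, ht⟩
    refine ⟨y + t • x, ht, ?_⟩
    rw [map_add, Submodule.orthogonalProjectionOnto_mem_subspace_eq_self, map_smul,
      Submodule.orthogonalProjectionOnto_orthogonalComplement_singleton_eq_zero, smul_zero,
      add_zero]

theorem toReal_volume_chord_rpow_le_indicator (hx : ‖x‖ = 1) {R : ℝ}
    (hC : C ⊆ closedBall 0 R) {q : ℝ} (hq : 0 < q) (y : (ℝ ∙ x)ᗮ) :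
    (volume (chord C x y)).toReal ^ q ≤
      (closedBall (0 : (ℝ ∙ x)ᗮ) R).indicator (fun _ => (2 * R) ^ q) y := by
  have hxy : ∀ t : ℝ, inner ℝ (y : E) (t • x) = 0 := fun t =>
    Submodule.inner_left_of_mem_orthogonal
      (Submodule.smul_mem _ t (Submodule.mem_span_singleton_self x)) y.2
  have hbound : ∀ t ∈ chord C x y, ‖y‖ ≤ R ∧ |t| ≤ R := fun t ht => by
    have ht' : ‖(y : E) + t • x‖ ≤ R := mem_closedBall_zero_iff.1 (hC ht)
    have hpyth := norm_add_sq_eq_norm_sq_add_norm_sq_real (hxy t)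
    rw [norm_smul, hx, mul_one, Real.norm_eq_abs, abs_mul_abs_self, ← Submodule.coe_norm] at hpyth
    have := norm_nonneg ((y : E) + t • x)
    refine ⟨?_, abs_le.2 ⟨?_, ?_⟩⟩ <;> nlinarith [norm_nonneg y]
  by_cases hy : ‖y‖ ≤ R
  · rw [indicator_of_mem (mem_closedBall_zero_iff.2 hy)]
    gcongr
    calc (volume (chord C x y)).toReal ≤ (volume (Icc (-R) R)).toReal :=
          ENNReal.toReal_mono (by simp) (measure_mono fun t ht => abs_le.1 (hbound t ht).2)
      _ = 2 * R := by
          rw [Real.volume_Icc, ENNReal.toReal_ofReal (by linarith [norm_nonneg y])]; ring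
  · rw [indicator_of_notMem (by simpa using hy)]
    have hempty : chord C x y = ∅ :=
      eq_empty_of_forall_notMem fun t ht => hy (hbound t ht).1
    simp [hempty, Real.zero_rpow hq.ne']

variable [MeasurableSpace E] [BorelSpace E]

theorem measurable_volume_chord (hC : IsClosed C) (x : E) :
    Measurable fun y : (ℝ ∙ x)ᗮ => volume (chord C x y) := by
  have hline : Continuous fun p : (ℝ ∙ x)ᗮ × ℝ => (p.1 : E) + p.2 • x := by fun_prop
  exact measurable_measure_prodMk_left (hC.preimage hline).measurableSet

variable [FiniteDimensional ℝ E]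

theorem ae_chord_interior_nonempty_or_chord_eq_empty (hK : Convex ℝ K)
    (hKi : (interior K).Nonempty) (x : E) :
    ∀ᵐ y : (ℝ ∙ x)ᗮ, (chord (interior K) x y).Nonempty ∨ chord K x y = ∅ := by
  set π := (ℝ ∙ x)ᗮ.orthogonalProjectionOnto
  have hπ : IsOpenMap π := π.isOpenMap fun y =>
    ⟨y, Submodule.orthogonalProjectionOnto_mem_subspace_eq_self y⟩
  have hshadow : Convex ℝ (π '' K) := hK.linear_image (π : E →ₗ[ℝ] (ℝ ∙ x)ᗮ)
  filter_upwards [measure_eq_zero_iff_ae_notMem.1 (hshadow.addHaar_frontier volume)] with y hy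
  by_cases hyK : y ∈ π '' K
  · have hyi : y ∈ interior (π '' K) := by
      by_contra hyi; exact hy ⟨subset_closure hyK, hyi⟩
    exact .inl (mem_image_orthogonalProjectionOnto_iff.1
      (hK.interior_image_subset_image_interior hKi π hπ hyi))
  · exact .inr (not_nonempty_iff_eq_empty.1 fun h =>
      hyK (mem_image_orthogonalProjectionOnto_iff.2 h))

end InnerProductSpace

theorem xray_integral_hausdorff_convergence_general (n : ℕ)
    (Km : ℕ → Set (EuclideanSpace ℝ (Fin n))) (K : Set (EuclideanSpace ℝ (Fin n)))
    (hKm : ∀ m, Convex ℝ (Km m)) (hKmc : ∀ m, IsCompact (Km m))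
    (hKmi : ∀ m, (interior (Km m)).Nonempty)
    (hK : Convex ℝ K) (hKc : IsCompact K) (hKi : (interior K).Nonempty)
    (hconv : Filter.Tendsto (fun m => Metric.hausdorffDist (Km m) K) Filter.atTop (nhds 0))
    (p : ℝ) (hp1 : -1 < p) (x : EuclideanSpace ℝ (Fin n)) (hx : ‖x‖ = 1) :
    Filter.Tendsto
      (fun m => ∫ y : ((ℝ ∙ x)ᗮ : Submodule ℝ (EuclideanSpace ℝ (Fin n))),
        ((volume {t : ℝ | (y : EuclideanSpace ℝ (Fin n)) + t • x ∈ Km m}).toReal) ^ (1 + p))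
      Filter.atTop
      (nhds (∫ y : ((ℝ ∙ x)ᗮ : Submodule ℝ (EuclideanSpace ℝ (Fin n))),
        ((volume {t : ℝ | (y : EuclideanSpace ℝ (Fin n)) + t • x ∈ K}).toReal) ^ (1 + p))) := by
  have hKmn : ∀ m, (Km m).Nonempty := fun m => (hKmi m).mono interior_subset
  have hKn : K.Nonempty := hKi.mono interior_subset
  have hfin : ∀ m, hausdorffEDist (Km m) K ≠ ⊤ := fun m =>
    hausdorffEDist_ne_top_of_nonempty_of_bounded (hKmn m) hKn (hKmc m).isBounded hKc.isBounded
  have hKmK : ∀ δ > 0, ∀ᶠ m in atTop, Km m ⊆ thickening δ K := fun δ hδ =>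
    (hconv.eventually_lt_const hδ).mono fun m hm =>
      subset_thickening_of_hausdorffDist_lt hKn (hfin m) hm
  have hKKm : ∀ δ > 0, ∀ᶠ m in atTop, K ⊆ thickening δ (Km m) := fun δ hδ =>
    (hconv.eventually_lt_const hδ).mono fun m hm =>
      subset_thickening_of_hausdorffDist_lt (hKmn m) (by rw [hausdorffEDist_comm]; exact hfin m)
        (by rwa [hausdorffDist_comm])
  have hx0 : x ≠ 0 := norm_ne_zero_iff.1 (hx ▸ one_ne_zero)
  have hq : 0 < 1 + p := by linarith
  obtain ⟨R, -, hR⟩ := (hKc.isBounded.thickening (δ := 1)).subset_closedBall_lt 0 0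
  refine tendsto_integral_filter_of_dominated_convergence
    ((closedBall (0 : (ℝ ∙ x)ᗮ) R).indicator fun _ => (2 * R) ^ (1 + p))
    (.of_forall fun m => ((measurable_volume_chord (hKmc m).isClosed x).ennreal_toReal.pow_const
      _).aestronglyMeasurable)
    ((hKmK 1 one_pos).mono fun m hm => .of_forall fun y => ?_)
    ((integrableOn_const measure_closedBall_lt_top.ne).integrable_indicator
      measurableSet_closedBall)
    ((ae_chord_interior_nonempty_or_chord_eq_empty hK hKi x).mono fun y hy => ?_)
  · rw [Real.norm_of_nonneg (by positivity)]
    exact toReal_volume_chord_rpow_le_indicator hx (hm.trans hR) hq y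
  · exact ((ENNReal.tendsto_toReal (isBounded_chord hKc.isBounded hx0).measure_lt_top.ne).comp
      (tendsto_volume_chord hKm (fun m => (hKmc m).isClosed) hK hKc.isClosed hKc.isBounded hx0
        hKmK hKKm hy)).rpow_const
      (.inr hq.le)

theorem xray_integral_hausdorff_convergence (n : ℕ)
    (Km : ℕ → Set (EuclideanSpace ℝ (Fin n))) (K : Set (EuclideanSpace ℝ (Fin n)))
    (hKm : ∀ m, Convex ℝ (Km m)) (hKmc : ∀ m, IsCompact (Km m))
    (hKmi : ∀ m, (interior (Km m)).Nonempty)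
    (hK : Convex ℝ K) (hKc : IsCompact K) (hKi : (interior K).Nonempty)
    (hconv : Filter.Tendsto (fun m => Metric.hausdorffDist (Km m) K) Filter.atTop (nhds 0))
    (p : ℝ) (hp1 : -1 < p) (hp0 : p < 0) (x : EuclideanSpace ℝ (Fin n)) (hx : ‖x‖ = 1) :
    Filter.Tendsto
      (fun m => ∫ y : ((ℝ ∙ x)ᗮ : Submodule ℝ (EuclideanSpace ℝ (Fin n))),
        ((volume {t : ℝ | (y : EuclideanSpace ℝ (Fin n)) + t • x ∈ Km m}).toReal) ^ (1 + p))
      Filter.atTop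
      (nhds (∫ y : ((ℝ ∙ x)ᗮ : Submodule ℝ (EuclideanSpace ℝ (Fin n))),
        ((volume {t : ℝ | (y : EuclideanSpace ℝ (Fin n)) + t • x ∈ K}).toReal) ^ (1 + p))) :=
  xray_integral_hausdorff_convergence_general n Km K hKm hKmc hKmi hK hKc hKi hconv p hp1 x hx
end

section
/- With notation as in the alternating-vectors setup (z_i alternating, w_i = z_i + z_{i+1}, n_i = (-1)^(i+1)⟨L w_i, z_i⟩^{-1} L w_i), for each i the vector L z_i is parallel to n_{i-1} - n_i; that is, if L z_i = a_i n_{i-1} + ã_i n_i (the pair {n_{i-1}, n_i} being linearly independent), then ã_i = -a_i. -/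
/-!
`L` is the quarter turn, so `⟪L x, x⟫ = 0`, and hence `⟪L (x + y), y⟫ = -⟪L (x + y), x⟫`.
With `w (i-1) = z (i-1) + z i` this gives `⟪n (i-1), z i⟫ = (-1)^(i+1)`, while
`⟪n i, z i⟫ = (-1)^(i+1)` by the choice of normalisation of `n i`. Pairing
`L (z i) = a • n (i-1) + a' • n i` with `z i` then yields `0 = (a + a') (-1)^(i+1)`.
-/

open RealInnerProductSpace

theorem inner_map_self_eq_zero_of_rotation {L : EuclideanSpace ℝ (Fin 2) →ₗ[ℝ] EuclideanSpace ℝ (Fin 2)}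
    (hL : ∀ x : EuclideanSpace ℝ (Fin 2), L x 0 = -x 1 ∧ L x 1 = x 0)
    (x : EuclideanSpace ℝ (Fin 2)) : ⟪L x, x⟫ = 0 := by
  simp only [PiLp.inner_apply, Fin.sum_univ_two, RCLike.inner_apply, conj_trivial,
    (hL x).1, (hL x).2]
  ring

section SkewMap

variable {E : Type*} [NormedAddCommGroup E] [InnerProductSpace ℝ E] {L : E →ₗ[ℝ] E}

theorem inner_map_add_eq_inner_map_right (hL : ∀ x, ⟪L x, x⟫ = 0) (x y : E) :
    ⟪L (x + y), x⟫ = ⟪L y, x⟫ := by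
  rw [map_add, inner_add_left, hL, zero_add]

theorem inner_map_add_right_eq_neg (hL : ∀ x, ⟪L x, x⟫ = 0) (x y : E) :
    ⟪L (x + y), y⟫ = -⟪L (x + y), x⟫ := by
  have h := hL (x + y)
  rw [inner_add_right] at h
  linarith

theorem inner_smul_inv_inner_self {v x : E} (hv : ⟪v, x⟫ ≠ 0) (s : ℝ) :
    ⟪(s * ⟪v, x⟫⁻¹) • v, x⟫ = s := by
  rw [real_inner_smul_left, mul_assoc, inv_mul_cancel₀ hv, mul_one]

theorem inner_smul_inv_inner_add_right (hL : ∀ x, ⟪L x, x⟫ = 0) {x y : E}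
    (hxy : ⟪L (x + y), x⟫ ≠ 0) (s : ℝ) :
    ⟪(s * ⟪L (x + y), x⟫⁻¹) • L (x + y), y⟫ = -s := by
  rw [real_inner_smul_left, inner_map_add_right_eq_neg hL, mul_neg, mul_assoc,
    inv_mul_cancel₀ hxy, mul_one]

theorem coeff_eq_neg_of_inner_eq (hL : ∀ x, ⟪L x, x⟫ = 0) {u v z : E} {s : ℝ} (hs : s ≠ 0)
    (hu : ⟪u, z⟫ = s) (hv : ⟪v, z⟫ = s) {a a' : ℝ} (hdec : L z = a • u + a' • v) :
    a' = -a := by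
  have h := hL z
  rw [hdec, inner_add_left, real_inner_smul_left, real_inner_smul_left, hu, hv] at h
  have : (a + a') * s = 0 := by linarith
  linarith [(mul_eq_zero.mp this).resolve_right hs]

end SkewMap

theorem alternating_Lz_parallel_diff_normals_general (m : ℕ)
    (L : EuclideanSpace ℝ (Fin 2) →ₗ[ℝ] EuclideanSpace ℝ (Fin 2))
    (hL : ∀ x : EuclideanSpace ℝ (Fin 2), L x 0 = -x 1 ∧ L x 1 = x 0)
    (z w n : ℕ → EuclideanSpace ℝ (Fin 2))
    (halt : ∀ i, 1 ≤ i → i ≤ m - 1 → 0 < (-1 : ℝ) ^ (i + 1) * inner ℝ (L (z (i + 1))) (z i))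
    (hw : ∀ i, 1 ≤ i → i ≤ m - 1 → w i = z i + z (i + 1))
    (hn : ∀ i, 1 ≤ i → i ≤ m - 1 →
      n i = ((-1 : ℝ) ^ (i + 1) * (inner ℝ (L (w i)) (z i) : ℝ)⁻¹) • L (w i))
    (i : ℕ) (hi1 : 2 ≤ i) (hi2 : i ≤ m - 1)
    (a a' : ℝ) (hdec : L (z i) = a • n (i - 1) + a' • n i) :
    a' = -a := by
  have hskew := inner_map_self_eq_zero_of_rotation hL
  obtain ⟨k, rfl⟩ : ∃ k, i = k + 1 := ⟨i - 1, by omega⟩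
  rw [Nat.add_sub_cancel] at hdec
  have hk : 1 ≤ k ∧ k ≤ m - 1 := by omega
  have hi : 1 ≤ k + 1 ∧ k + 1 ≤ m - 1 := by omega
  have hwk : w k = z k + z (k + 1) := hw k hk.1 hk.2
  have hwi : w (k + 1) = z (k + 1) + z (k + 2) := hw (k + 1) hi.1 hi.2
  have hck : ⟪L (z k + z (k + 1)), z k⟫ ≠ 0 := by
    rw [ inner_map_add_eq_inner_map_right hskew]
    exact right_ne_zero_of_mul (halt k hk.1 hk.2).ne'
  have hci : ⟪L (w (k + 1)), z (k + 1)⟫ ≠ 0 := by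
    rw [hwi, inner_map_add_eq_inner_map_right hskew]
    exact right_ne_zero_of_mul (halt (k + 1) hi.1 hi.2).ne'
  have hprev : ⟪n k, z (k + 1)⟫ = (-1) ^ (k + 2) := by
    rw [hn k hk.1 hk.2, hwk, inner_smul_inv_inner_add_right hskew hck,
      pow_succ _ (k + 1), mul_neg_one]
  have hcur : ⟪n (k + 1), z (k + 1)⟫ = (-1) ^ (k + 2) :=
    (hn (k + 1) hi.1 hi.2) ▸ inner_smul_inv_inner_self hci _
  exact coeff_eq_neg_of_inner_eq hskew (by positivity) hprev hcur hdec

theorem alternating_Lz_parallel_diff_normals (m : ℕ)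
    (L : EuclideanSpace ℝ (Fin 2) →ₗ[ℝ] EuclideanSpace ℝ (Fin 2))
    (hL : ∀ x : EuclideanSpace ℝ (Fin 2), L x 0 = -x 1 ∧ L x 1 = x 0)
    (z w n : ℕ → EuclideanSpace ℝ (Fin 2))
    (hz : ∀ i, 1 ≤ i → i ≤ m → z i ≠ 0)
    (halt : ∀ i, 1 ≤ i → i ≤ m - 1 → 0 < (-1 : ℝ) ^ (i + 1) * inner ℝ (L (z (i + 1))) (z i))
    (hw : ∀ i, 1 ≤ i → i ≤ m - 1 → w i = z i + z (i + 1))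
    (hn : ∀ i, 1 ≤ i → i ≤ m - 1 →
      n i = ((-1 : ℝ) ^ (i + 1) * (inner ℝ (L (w i)) (z i) : ℝ)⁻¹) • L (w i))
    (i : ℕ) (hi1 : 2 ≤ i) (hi2 : i ≤ m - 1)
    (hind : LinearIndependent ℝ ![n (i - 1), n i])
    (a a' : ℝ) (hdec : L (z i) = a • n (i - 1) + a' • n i) :
    a' = -a :=
  alternating_Lz_parallel_diff_normals_general m L hL z w n halt hw hn i hi1 hi2 a a' hdec
end

section
/- Let p ∈ (-1, 0), v₀, v₁, …, v_k ∈ ℝ² nonzero, and let D be a closed convex cone (minus the origin) on which all functions x ↦ ⟨v_j, x⟩ (j = 0,…,k) are strictly positive and on which f(x) = ⟨v₀, x⟩^(-p) - ∑_{j=1}^k ⟨v_j, x⟩^(-p) is strictly positive. Then the function x ↦ f(x)^(-1/p) is convex on D. -/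
/-!
Write `q = -p ∈ (0, 1)`, `A = ⟨v₀, x⟩`, `B_j = ⟨v_j, x⟩` and `g = (A ^ q - ∑ B_j ^ q) ^ (1 / q)`.
Then `A` is the `ℓ^q`-"norm" of the vector `(g, B_1, …, B_k)`, and for `q ≤ 1` this quantity is
superadditive on nonnegative vectors (reverse Minkowski, from concavity of `t ↦ t ^ q`).
Applied to the vectors of `x` and `y`, this makes `g` subadditive; as `g` is also positively
homogeneous and the `A`, `B_j` are linear in `x`, `g` is convex.
-/

open Finset

namespace Real

variable {ι : Type*} [Fintype ι] {q : ℝ}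

theorem Lp_le_Lp_of_le (hq : 0 < q) {u w : ι → ℝ} (hu : ∀ i, 0 ≤ u i) (huw : ∀ i, u i ≤ w i) :
    (∑ i, u i ^ q) ^ q⁻¹ ≤ (∑ i, w i ^ q) ^ q⁻¹ :=
  rpow_le_rpow (sum_nonneg fun i _ => rpow_nonneg (hu i) q)
    (sum_le_sum fun i _ => rpow_le_rpow (hu i) (huw i) hq.le) (inv_nonneg.2 hq.le)

theorem sum_rpow_div_Lp_rpow (hq : 0 < q) {u : ι → ℝ} (hu : ∀ i, 0 ≤ u i)
    (hU : 0 < (∑ i, u i ^ q) ^ q⁻¹) :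
    ∑ i, (u i / (∑ i, u i ^ q) ^ q⁻¹) ^ q = 1 := by
  have hS : 0 ≤ ∑ i, u i ^ q := sum_nonneg fun i _ => rpow_nonneg (hu i) q
  simp only [div_rpow (hu _) hU.le, ← sum_div, rpow_inv_rpow hS hq.ne']
  refine div_self fun h => hU.ne' ?_
  rw [h, zero_rpow (inv_ne_zero hq.ne')]

theorem Lp_add_ge_of_le_one (hq0 : 0 < q) (hq1 : q ≤ 1) {u w : ι → ℝ}
    (hu : ∀ i, 0 ≤ u i) (hw : ∀ i, 0 ≤ w i) :
    (∑ i, u i ^ q) ^ q⁻¹ + (∑ i, w i ^ q) ^ q⁻¹ ≤ (∑ i, (u i + w i) ^ q) ^ q⁻¹ := by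
  set U := (∑ i, u i ^ q) ^ q⁻¹
  set W := (∑ i, w i ^ q) ^ q⁻¹
  have hU : 0 ≤ U := rpow_nonneg (sum_nonneg fun i _ => rpow_nonneg (hu i) q) _
  have hW : 0 ≤ W := rpow_nonneg (sum_nonneg fun i _ => rpow_nonneg (hw i) q) _
  rcases hU.eq_or_lt with hU0 | hU0
  · rw [← hU0, zero_add]
    exact Lp_le_Lp_of_le hq0 hw fun i => le_add_of_nonneg_left (hu i)
  rcases hW.eq_or_lt with hW0 | hW0
  · rw [← hW0, add_zero]
    exact Lp_le_Lp_of_le hq0 hu fun i => le_add_of_nonneg_right (hw i)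
  have hUW : 0 < U + W := add_pos hU0 hW0
  -- Jensen for `t ↦ t ^ q` between `u i / U` and `w i / W`, with weights `U / (U + W)`, `W / (U + W)`
  have hjensen : ∀ i, U / (U + W) * (u i / U) ^ q + W / (U + W) * (w i / W) ^ q ≤
      (u i + w i) ^ q / (U + W) ^ q := by
    intro i
    have h := (concaveOn_rpow hq0.le hq1).2 (Set.mem_Ici.2 (div_nonneg (hu i) hU))
      (Set.mem_Ici.2 (div_nonneg (hw i) hW)) (div_nonneg hU hUW.le) (div_nonneg hW hUW.le)
      (by field_simp)
    have hmix : U / (U + W) * (u i / U) + W / (U + W) * (w i / W) = (u i + w i) / (U + W) := by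
      field_simp
    simp only [smul_eq_mul, hmix] at h
    rwa [← div_rpow (add_nonneg (hu i) (hw i)) hUW.le]
  have hsum := sum_le_sum fun i (_ : i ∈ univ) => hjensen i
  rw [sum_add_distrib, ← mul_sum, ← mul_sum, sum_rpow_div_Lp_rpow hq0 hu hU0,
    sum_rpow_div_Lp_rpow hq0 hw hW0, ← sum_div, mul_one, mul_one, ← add_div,
    div_self hUW.ne', one_le_div (rpow_pos_of_pos hUW q)] at hsum
  calc U + W = ((U + W) ^ q) ^ q⁻¹ := (rpow_rpow_inv hUW.le hq0.ne').symm
    _ ≤ _ := rpow_le_rpow (rpow_nonneg hUW.le q) hsum (inv_nonneg.2 hq0.le)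

theorem rpow_sub_sum_rpow_rpow_inv_add_le (hq0 : 0 < q) (hq1 : q ≤ 1) {A₁ A₂ : ℝ}
    {B₁ B₂ : ι → ℝ} (hA₁ : 0 ≤ A₁) (hA₂ : 0 ≤ A₂) (hB₁ : ∀ i, 0 ≤ B₁ i) (hB₂ : ∀ i, 0 ≤ B₂ i)
    (hf₁ : 0 ≤ A₁ ^ q - ∑ i, B₁ i ^ q) (hf₂ : 0 ≤ A₂ ^ q - ∑ i, B₂ i ^ q)
    (hf : 0 ≤ (A₁ + A₂) ^ q - ∑ i, (B₁ i + B₂ i) ^ q) :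
    ((A₁ + A₂) ^ q - ∑ i, (B₁ i + B₂ i) ^ q) ^ q⁻¹ ≤
      (A₁ ^ q - ∑ i, B₁ i ^ q) ^ q⁻¹ + (A₂ ^ q - ∑ i, B₂ i ^ q) ^ q⁻¹ := by
  have hg₁ := rpow_nonneg hf₁ q⁻¹
  have hg₂ := rpow_nonneg hf₂ q⁻¹
  -- `A₁, A₂` are the `q`-norms of `(g₁, B₁), (g₂, B₂)`, where `g₁, g₂` are the terms on the right
  have hmink := Lp_add_ge_of_le_one hq0 hq1
    (u := fun i : Option ι => i.elim ((A₁ ^ q - ∑ i, B₁ i ^ q) ^ q⁻¹) B₁)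
    (w := fun i : Option ι => i.elim ((A₂ ^ q - ∑ i, B₂ i ^ q) ^ q⁻¹) B₂)
    (fun i => i.rec hg₁ hB₁) (fun i => i.rec hg₂ hB₂)
  simp only [Fintype.sum_option, Option.elim, rpow_inv_rpow hf₁ hq0.ne',
    rpow_inv_rpow hf₂ hq0.ne', sub_add_cancel, rpow_rpow_inv hA₁ hq0.ne',
    rpow_rpow_inv hA₂ hq0.ne'] at hmink
  rw [le_rpow_inv_iff_of_pos (add_nonneg hA₁ hA₂)
    (add_nonneg (rpow_nonneg (add_nonneg hg₁ hg₂) q)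
      (sum_nonneg fun i _ => rpow_nonneg (add_nonneg (hB₁ i) (hB₂ i)) q)) hq0] at hmink
  rw [rpow_inv_le_iff_of_pos hf (add_nonneg hg₁ hg₂) hq0]
  linarith

theorem mul_rpow_sub_sum_mul_rpow {c A : ℝ} {B : ι → ℝ} (hc : 0 ≤ c) (hA : 0 ≤ A)
    (hB : ∀ i, 0 ≤ B i) :
    (c * A) ^ q - ∑ i, (c * B i) ^ q = c ^ q * (A ^ q - ∑ i, B i ^ q) := by
  simp only [mul_rpow hc hA, mul_rpow hc (hB _), ← mul_sum, mul_sub]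

theorem mul_rpow_sub_sum_mul_rpow_rpow_inv (hq : q ≠ 0) {c A : ℝ} {B : ι → ℝ} (hc : 0 ≤ c)
    (hA : 0 ≤ A) (hB : ∀ i, 0 ≤ B i) (hf : 0 ≤ A ^ q - ∑ i, B i ^ q) :
    ((c * A) ^ q - ∑ i, (c * B i) ^ q) ^ q⁻¹ = c * (A ^ q - ∑ i, B i ^ q) ^ q⁻¹ := by
  rw [mul_rpow_sub_sum_mul_rpow hc hA hB, mul_rpow (rpow_nonneg hc q) hf, rpow_rpow_inv hc hq]

end Real

open Real in
theorem convexOn_rpow_sub_sum_rpow_rpow_inv {ι E : Type*} [Fintype ι] [AddCommGroup E]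
    [Module ℝ E] {q : ℝ} (hq0 : 0 < q) (hq1 : q ≤ 1) (ℓ₀ : E →ₗ[ℝ] ℝ) (ℓ : ι → E →ₗ[ℝ] ℝ)
    {D : Set E} (hD : Convex ℝ D) (hℓ₀ : ∀ x ∈ D, 0 ≤ ℓ₀ x) (hℓ : ∀ i, ∀ x ∈ D, 0 ≤ ℓ i x)
    (hf : ∀ x ∈ D, 0 ≤ ℓ₀ x ^ q - ∑ i, ℓ i x ^ q) :
    ConvexOn ℝ D fun x => (ℓ₀ x ^ q - ∑ i, ℓ i x ^ q) ^ q⁻¹ := by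
  refine ⟨hD, fun x hx y hy a b ha hb hab => ?_⟩
  have hxy := hf _ (hD hx hy ha hb hab)
  have hscaled : ∀ {c z}, 0 ≤ c → z ∈ D → 0 ≤ (c * ℓ₀ z) ^ q - ∑ i, (c * ℓ i z) ^ q :=
    fun hc hz => by
      rw [mul_rpow_sub_sum_mul_rpow hc (hℓ₀ _ hz) (hℓ · _ hz)]
      exact mul_nonneg (rpow_nonneg hc q) (hf _ hz)
  simp only [map_add, map_smul, smul_eq_mul] at hxy ⊢
  rw [← mul_rpow_sub_sum_mul_rpow_rpow_inv hq0.ne' ha (hℓ₀ x hx) (hℓ · x hx) (hf x hx),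
    ← mul_rpow_sub_sum_mul_rpow_rpow_inv hq0.ne' hb (hℓ₀ y hy) (hℓ · y hy) (hf y hy)]
  exact rpow_sub_sum_rpow_rpow_inv_add_le hq0 hq1 (mul_nonneg ha (hℓ₀ x hx))
    (mul_nonneg hb (hℓ₀ y hy)) (fun i => mul_nonneg ha (hℓ i x hx))
    (fun i => mul_nonneg hb (hℓ i y hy)) (hscaled ha hx) (hscaled hb hy) hxy

theorem convexOn_rpow_of_linear_combination_general (p : ℝ) (hp1 : -1 < p) (hp0 : p < 0)
    (k : ℕ) (v₀ : EuclideanSpace ℝ (Fin 2)) (v : Fin k → EuclideanSpace ℝ (Fin 2))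
    (D : Set (EuclideanSpace ℝ (Fin 2)))
    (hDconv : Convex ℝ D)
    (hpos₀ : ∀ x ∈ D, 0 < (inner ℝ v₀ x : ℝ))
    (hpos : ∀ j, ∀ x ∈ D, 0 < (inner ℝ (v j) x : ℝ))
    (hfpos : ∀ x ∈ D, 0 < (inner ℝ v₀ x : ℝ) ^ (-p) - ∑ j, (inner ℝ (v j) x : ℝ) ^ (-p)) :
    ConvexOn ℝ D
      (fun x => ((inner ℝ v₀ x : ℝ) ^ (-p) - ∑ j, (inner ℝ (v j) x : ℝ) ^ (-p)) ^ (-1 / p)) := by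
  rw [neg_div, ← div_neg, one_div]
  exact convexOn_rpow_sub_sum_rpow_rpow_inv (neg_pos.2 hp0) (by linarith) (innerₛₗ ℝ v₀)
    (fun j => innerₛₗ ℝ (v j)) hDconv (fun x hx => (hpos₀ x hx).le)
    (fun j x hx => (hpos j x hx).le) fun x hx => (hfpos x hx).le

theorem convexOn_rpow_of_linear_combination (p : ℝ) (hp1 : -1 < p) (hp0 : p < 0)
    (k : ℕ) (v₀ : EuclideanSpace ℝ (Fin 2)) (v : Fin k → EuclideanSpace ℝ (Fin 2))
    (hv₀ : v₀ ≠ 0) (hv : ∀ j, v j ≠ 0)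
    (D : Set (EuclideanSpace ℝ (Fin 2)))
    (hDconv : Convex ℝ D) (hD0 : (0 : EuclideanSpace ℝ (Fin 2)) ∉ D)
    (hDcone : ∀ x ∈ D, ∀ t : ℝ, 0 < t → t • x ∈ D)
    (hDclosed : IsClosed (insert (0 : EuclideanSpace ℝ (Fin 2)) D))
    (hpos₀ : ∀ x ∈ D, 0 < (inner ℝ v₀ x : ℝ))
    (hpos : ∀ j, ∀ x ∈ D, 0 < (inner ℝ (v j) x : ℝ))
    (hfpos : ∀ x ∈ D, 0 < (inner ℝ v₀ x : ℝ) ^ (-p) - ∑ j, (inner ℝ (v j) x : ℝ) ^ (-p)) :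
    ConvexOn ℝ D
      (fun x => ((inner ℝ v₀ x : ℝ) ^ (-p) - ∑ j, (inner ℝ (v j) x : ℝ) ^ (-p)) ^ (-1 / p)) :=
  convexOn_rpow_of_linear_combination_general p hp1 hp0 k v₀ v D hDconv hpos₀ hpos hfpos
end

section
/- Let K ⊆ ℝⁿ be a convex body, p ∈ (-1,0), and for v ≠ 0 define ‖v‖_{R_p K} = ((1/vol(K)) ∫_K ρ_K(x, v)^p dx)^(-1/p). Then ‖·‖_{R_p K} is positively homogeneous of degree 1: ‖λ v‖ = |λ| ‖v‖ for all λ ∈ ℝ, v ∈ ℝⁿ \ {0}. -/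
open MeasureTheory
open scoped Classical

/-- The radial function of `K` with respect to `x` in the direction `v`. -/
noncomputable def radialFn (n : ℕ) (K : Set (EuclideanSpace ℝ (Fin n)))
    (x v : EuclideanSpace ℝ (Fin n)) : ℝ :=
  sSup {t : ℝ | 0 < t ∧ x + t • v ∈ K}

/-- The gauge `‖·‖_{R_p K}` of the radial mean body of parameter `p`. -/
noncomputable def radialMeanGauge (n : ℕ) (K : Set (EuclideanSpace ℝ (Fin n))) (p : ℝ)
    (v : EuclideanSpace ℝ (Fin n)) : ℝ :=
  if v = 0 then 0
  else ((volume K).toReal⁻¹ * ∫ x in K, radialFn n K x v ^ p) ^ (-1 / p)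

/-! Positive scalars pull out of the radial function, `ρ_K(x, μ w) = μ⁻¹ ρ_K(x, w)`, and hence out
of the gauge, since `(μ^(-p))^(-1/p) = μ`. For `λ < 0` it remains to see `‖-v‖ = ‖v‖`. By convexity,
for `c > 0` the superlevel set `{x ∈ K | c ≤ ρ_K(x, v)}` is `K ∩ (K - c v)`, a translate of
`K ∩ (K + c v)`; so `ρ_K(·, v)` and `ρ_K(·, -v)` are equidistributed on `K` and have the same
`p`-th moments. -/

theorem MeasureTheory.measure_inter_preimage_sub_right {G : Type*} [AddGroup G]
    [MeasurableSpace G] [MeasurableAdd G] (μ : Measure G) [μ.IsAddRightInvariant]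
    (s : Set G) (a : G) :
    μ (s ∩ (· - a) ⁻¹' s) = μ (s ∩ (· + a) ⁻¹' s) := by
  have h : s ∩ (· - a) ⁻¹' s = (· + -a) ⁻¹' ((· + a) ⁻¹' s ∩ s) := by
    ext x
    simp [sub_eq_add_neg]
  rw [h, measure_preimage_add_right, Set.inter_comm]

namespace radialFn

open scoped Pointwise

variable {n : ℕ} {K : Set (EuclideanSpace ℝ (Fin n))}

theorem nonneg (x v : EuclideanSpace ℝ (Fin n)) : 0 ≤ radialFn n K x v :=
  Real.sSup_nonneg fun _ ht => ht.1.le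

theorem smul_of_pos (x w : EuclideanSpace ℝ (Fin n)) {μ : ℝ} (hμ : 0 < μ) :
    radialFn n K x (μ • w) = μ⁻¹ * radialFn n K x w := by
  have h : {t : ℝ | 0 < t ∧ x + t • (μ • w) ∈ K} = μ⁻¹ • {t : ℝ | 0 < t ∧ x + t • w ∈ K} := by
    ext t
    rw [Set.mem_inv_smul_set_iff₀ hμ.ne']
    simp [smul_smul, mul_comm μ, hμ]
  rw [radialFn, h, Real.sSup_smul_of_nonneg (inv_nonneg.2 hμ.le), smul_eq_mul, radialFn]

theorem bddAbove (hK : Bornology.IsBounded K) (x : EuclideanSpace ℝ (Fin n))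
    {v : EuclideanSpace ℝ (Fin n)} (hv : v ≠ 0) :
    BddAbove {t : ℝ | 0 < t ∧ x + t • v ∈ K} := by
  obtain ⟨C, hC⟩ := isBounded_iff_forall_norm_le.1 hK
  refine ⟨(C + ‖x‖) / ‖v‖, fun t ⟨ht, hmem⟩ => ?_⟩
  rw [le_div_iff₀ (norm_pos_iff.2 hv)]
  calc t * ‖v‖ = ‖(x + t • v) - x‖ := by
        rw [add_sub_cancel_left, norm_smul, Real.norm_of_nonneg ht.le]
    _ ≤ ‖x + t • v‖ + ‖x‖ := norm_sub_le _ _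
    _ ≤ C + ‖x‖ := by gcongr; exact hC _ hmem

theorem add_smul_mem (hK : IsCompact K) (x : EuclideanSpace ℝ (Fin n))
    {v : EuclideanSpace ℝ (Fin n)} (hv : v ≠ 0)
    (hne : {t : ℝ | 0 < t ∧ x + t • v ∈ K}.Nonempty) :
    x + radialFn n K x v • v ∈ K :=
  closure_minimal (s := {t : ℝ | 0 < t ∧ x + t • v ∈ K}) (fun _ ht => ht.2)
    (hK.isClosed.preimage (by fun_prop)) (csSup_mem_closure hne (bddAbove hK.isBounded x hv))

theorem le_iff (hKconv : Convex ℝ K) (hK : IsCompact K) {x : EuclideanSpace ℝ (Fin n)}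
    (hx : x ∈ K) {v : EuclideanSpace ℝ (Fin n)} (hv : v ≠ 0) {c : ℝ} (hc : 0 < c) :
    c ≤ radialFn n K x v ↔ x + c • v ∈ K := by
  refine ⟨fun h => ?_, fun h => le_csSup (bddAbove hK.isBounded x hv) ⟨hc, h⟩⟩
  have hρ : 0 < radialFn n K x v := hc.trans_le h
  have hne : {t : ℝ | 0 < t ∧ x + t • v ∈ K}.Nonempty := by
    by_contra h'
    rw [Set.not_nonempty_iff_eq_empty] at h'
    rw [radialFn, h', Real.sSup_empty] at hρ
    exact hρ.false
  have hseg := hKconv.add_smul_mem hx (add_smul_mem hK x hv hne)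
    (t := c / radialFn n K x v) ⟨by positivity, (div_le_one hρ).2 h⟩
  rwa [smul_smul, div_mul_cancel₀ _ hρ.ne'] at hseg

theorem setOf_le_inter (hKconv : Convex ℝ K) (hK : IsCompact K)
    {v : EuclideanSpace ℝ (Fin n)} (hv : v ≠ 0) {c : ℝ} (hc : 0 < c) :
    {x | c ≤ radialFn n K x v} ∩ K = K ∩ (· + c • v) ⁻¹' K := by
  ext x
  simp only [Set.mem_inter_iff, Set.mem_ofPred_eq, Set.mem_preimage]
  exact ⟨fun ⟨h, hx⟩ => ⟨hx, (le_iff hKconv hK hx hv hc).1 h⟩,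
    fun ⟨hx, h⟩ => ⟨(le_iff hKconv hK hx hv hc).2 h, hx⟩⟩

theorem measurable_indicator (hKconv : Convex ℝ K) (hK : IsCompact K)
    {v : EuclideanSpace ℝ (Fin n)} (hv : v ≠ 0) :
    Measurable (K.indicator fun x => radialFn n K x v) := by
  refine measurable_of_Ici fun c => ?_
  rcases le_or_gt c 0 with hc | hc
  · have h : K.indicator (fun x => radialFn n K x v) ⁻¹' Set.Ici c = Set.univ :=
      Set.eq_univ_of_forall fun x => hc.trans (Set.indicator_nonneg (fun x _ => nonneg x v) x)
    simp [h]
  · have h : K.indicator (fun x => radialFn n K x v) ⁻¹' Set.Ici c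
        = {x | c ≤ radialFn n K x v} ∩ K := by
      ext x
      by_cases hx : x ∈ K <;> simp [hx, hc.not_ge]
    rw [h, setOf_le_inter hKconv hK hv hc]
    exact hK.measurableSet.inter (hK.measurableSet.preimage (by fun_prop))

theorem aemeasurable (hKconv : Convex ℝ K) (hK : IsCompact K)
    {v : EuclideanSpace ℝ (Fin n)} (hv : v ≠ 0) :
    AEMeasurable (fun x => radialFn n K x v) (volume.restrict K) :=
  (aemeasurable_indicator_iff hK.measurableSet).1 (measurable_indicator hKconv hK hv).aemeasurable

theorem map_neg (hKconv : Convex ℝ K) (hK : IsCompact K) (v : EuclideanSpace ℝ (Fin n)) :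
    (volume.restrict K).map (fun x => radialFn n K x (-v))
      = (volume.restrict K).map (fun x => radialFn n K x v) := by
  rcases eq_or_ne v 0 with rfl | hv
  · rw [neg_zero]
  have : IsFiniteMeasure (volume.restrict K) :=
    isFiniteMeasure_restrict.2 hK.measure_lt_top.ne
  refine Measure.ext_of_Ici _ _ fun c => ?_
  rw [Measure.map_apply_of_aemeasurable (aemeasurable hKconv hK (neg_ne_zero.2 hv))
      measurableSet_Ici, Measure.map_apply_of_aemeasurable (aemeasurable hKconv hK hv)
      measurableSet_Ici, Measure.restrict_apply' hK.measurableSet,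
    Measure.restrict_apply' hK.measurableSet]
  rcases le_or_gt c 0 with hc | hc
  · have h (w : EuclideanSpace ℝ (Fin n)) : (fun x => radialFn n K x w) ⁻¹' Set.Ici c = Set.univ :=
      Set.eq_univ_of_forall fun x => hc.trans (nonneg x w)
    rw [h, h]
  · simp only [Set.preimage, Set.mem_Ici]
    rw [setOf_le_inter hKconv hK (neg_ne_zero.2 hv) hc, setOf_le_inter hKconv hK hv hc]
    simp only [smul_neg, ← sub_eq_add_neg]
    exact measure_inter_preimage_sub_right volume K (c • v)

theorem setIntegral_comp_neg {E : Type*} [NormedAddCommGroup E] [NormedSpace ℝ E]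
    (hKconv : Convex ℝ K) (hK : IsCompact K) {g : ℝ → E} (hg : StronglyMeasurable g)
    (v : EuclideanSpace ℝ (Fin n)) :
    ∫ x in K, g (radialFn n K x (-v)) = ∫ x in K, g (radialFn n K x v) := by
  rcases eq_or_ne v 0 with rfl | hv
  · rw [neg_zero]
  rw [← integral_map (aemeasurable hKconv hK (neg_ne_zero.2 hv)) hg.aestronglyMeasurable,
    map_neg hKconv hK, integral_map (aemeasurable hKconv hK hv) hg.aestronglyMeasurable]

end radialFn

namespace radialMeanGauge

variable {n : ℕ} {K : Set (EuclideanSpace ℝ (Fin n))} {p : ℝ}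

theorem neg (hKconv : Convex ℝ K) (hK : IsCompact K) (v : EuclideanSpace ℝ (Fin n)) :
    radialMeanGauge n K p (-v) = radialMeanGauge n K p v := by
  simp only [radialMeanGauge, neg_eq_zero,
    radialFn.setIntegral_comp_neg hKconv hK (g := fun t => t ^ p)
      (measurable_id.pow_const p).stronglyMeasurable]

theorem smul_of_pos (hp : p ≠ 0) {μ : ℝ} (hμ : 0 < μ) (w : EuclideanSpace ℝ (Fin n)) :
    radialMeanGauge n K p (μ • w) = μ * radialMeanGauge n K p w := by
  rcases eq_or_ne w 0 with rfl | hw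
  · simp [radialMeanGauge]
  have hI : 0 ≤ (volume K).toReal⁻¹ * ∫ x in K, radialFn n K x w ^ p :=
    mul_nonneg (by positivity) (integral_nonneg fun x => Real.rpow_nonneg (radialFn.nonneg x w) p)
  simp only [radialMeanGauge, smul_eq_zero, hμ.ne', hw, or_self, if_false,
    radialFn.smul_of_pos _ _ hμ, Real.mul_rpow (inv_nonneg.2 hμ.le) (radialFn.nonneg _ w),
    integral_const_mul, mul_left_comm _ (μ⁻¹ ^ p)]
  rw [Real.mul_rpow (by positivity) hI, ← Real.rpow_mul (by positivity),
    mul_div_cancel₀ (-1) hp, Real.rpow_neg_one, inv_inv]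

end radialMeanGauge

theorem radialMeanGauge_homogeneous_general (n : ℕ) (K : Set (EuclideanSpace ℝ (Fin n)))
    (hKconv : Convex ℝ K) (hKcomp : IsCompact K)
    (p : ℝ) (hp0 : p < 0)
    (lam : ℝ) (v : EuclideanSpace ℝ (Fin n)) :
    radialMeanGauge n K p (lam • v) = |lam| * radialMeanGauge n K p v := by
  rcases lt_trichotomy lam 0 with hneg | rfl | hpos
  · rw [← neg_smul_neg, radialMeanGauge.smul_of_pos hp0.ne (neg_pos.2 hneg),
      radialMeanGauge.neg hKconv hKcomp, abs_of_neg hneg]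
  · simp [radialMeanGauge]
  · rw [radialMeanGauge.smul_of_pos hp0.ne hpos, abs_of_pos hpos]

theorem radialMeanGauge_homogeneous (n : ℕ) (K : Set (EuclideanSpace ℝ (Fin n)))
    (hKconv : Convex ℝ K) (hKcomp : IsCompact K) (hKint : (interior K).Nonempty)
    (p : ℝ) (hp1 : -1 < p) (hp0 : p < 0)
    (lam : ℝ) (v : EuclideanSpace ℝ (Fin n)) (hv : v ≠ 0) :
    radialMeanGauge n K p (lam • v) = |lam| * radialMeanGauge n K p v :=
  radialMeanGauge_homogeneous_general n K hKconv hKcomp p hp0 lam v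
end
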